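/- arXiv:1201.5994 — 4 statements merged into one kernel-verified Lean document; each statement's English description precedes it below -/
import Mathlib

section
/- Let q be a prime power and let S be a finite set of vectors of 𝔽_q^k (k ≥ 2) with |S| ≥ k and with the property that every subset of S of size k is a basis of 𝔽_q^k. Then for every subset Y of S of size k − 2, the number of hyperplanes H of 𝔽_q^k (i.e., (k−1)-dimensional linear subspaces) satisfying Y ⊆ H and H ∩ S = Y is exactly q + k − 1 − |S| (in particular |S| ≤ q + k − 1). -/
/-!
Let `W` be the span of `Y`; it has codimension `2`, so the hyperplanes containing `Y` correspond
to the `q + 1` lines of the plane `V ⧸ W`. Each `s ∈ S \ Y` spans a line of `V ⧸ W`, and distinct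
points span distinct lines because `Y ∪ {s, t}` is a basis. A hyperplane through `Y` meets `S`
exactly in `Y` iff its line is none of these, which leaves `q + 1 - (|S| - (k - 2))` hyperplanes.
-/

open Module Submodule

theorem Set.inter_eq_iff_forall_notMem_sdiff {α : Type*} {Y H S : Set α} (hYH : Y ⊆ H)
    (hYS : Y ⊆ S) : H ∩ S = Y ↔ ∀ x ∈ S \ Y, x ∉ H := by
  refine ⟨fun h x hx hxH => hx.2 (h ▸ ⟨hxH, hx.1⟩), fun h => ?_⟩
  ext x
  exact ⟨fun hx => by_contra fun hxY => h x ⟨hx.2, hxY⟩ hx.1, fun hx => ⟨hYH hx, hYS hx⟩⟩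

theorem Submodule.span_pair_mkQ_eq_top {R M : Type*} [Ring R] [AddCommGroup M] [Module R M]
    {Y : Set M} {s t : M} (h : span R (insert s (insert t Y)) = ⊤) :
    span R {(span R Y).mkQ s, (span R Y).mkQ t} = ⊤ := by
  rw [← Set.image_pair, ← map_span, map_mkQ_eq_top, ← span_union, Set.union_comm,
    Set.insert_union, Set.singleton_union, h]

theorem span_insert_insert_eq_top_of_subset {R M : Type*} [Semiring R] [AddCommMonoid M]
    [Module R M] [DecidableEq M] {n : ℕ} {S Y : Finset M}
    (hspan : ∀ A ⊆ S, A.card = n → span R (A : Set M) = ⊤) (hYS : Y ⊆ S) (hY : Y.card + 2 = n) :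
    ((S \ Y : Finset M) : Set M).Pairwise
      fun s t => span R (insert s (insert t (Y : Set M))) = ⊤ := by
  intro s hs t ht hst
  rw [Finset.mem_coe, Finset.mem_sdiff] at hs ht
  have hcard : (insert s (insert t Y)).card = n := by
    rw [Finset.card_insert_of_notMem (by simp [hst, hs.2]), Finset.card_insert_of_notMem ht.2, hY]
  simpa using hspan _ (Finset.insert_subset hs.1 (Finset.insert_subset ht.1 hYS)) hcard

section Field

variable {F V : Type*} [Field F] [AddCommGroup V] [Module F V]

theorem finrank_span_finset_eq_card_of_subset {n : ℕ} {S Y : Finset V} (hS : n ≤ S.card)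
    (hindep : ∀ A ⊆ S, A.card = n → LinearIndepOn F id (A : Set V)) (hYS : Y ⊆ S)
    (hY : Y.card ≤ n) : finrank F (span F (Y : Set V)) = Y.card := by
  obtain ⟨A, hYA, hAS, hA⟩ := Finset.exists_subsuperset_card_eq hYS hY hS
  exact finrank_span_finset_eq_card ((hindep A hAS hA).mono (Finset.coe_subset.2 hYA))

theorem notMem_span_singleton_of_span_pair_eq_top (hV : finrank F V = 2) {v w : V}
    (h : span F {v, w} = ⊤) : w ∉ span F {v} := by
  intro hw
  have hv : span F {v} = ⊤ := top_le_iff.1 <| h ▸ span_le.2 <|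
    Set.insert_subset (mem_span_singleton_self v) (Set.singleton_subset_iff.2 hw)
  have := finrank_span_le_card (R := F) ({v} : Set V)
  rw [hv, finrank_top, hV] at this
  simp at this

theorem card_lines_notMem_add_card [Finite F] (hV : finrank F V = 2) {ι : Type*}
    (T : Finset ι) (f : ι → V) (hf : ∀ i ∈ T, f i ≠ 0)
    (hT : (T : Set ι).Pairwise fun i j => span F {f i, f j} = ⊤) :
    Nat.card {L : Submodule F V // finrank F L = 1 ∧ ∀ i ∈ T, f i ∉ L} + T.card =
      Nat.card F + 1 := by
  have : FiniteDimensional F V := Module.finite_of_finrank_pos (by omega)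
  set lines : Set (Submodule F V) := {L | finrank F L = 1}
  set line : ι → Submodule F V := fun i => span F {f i}
  have hlines : lines.ncard = Nat.card F + 1 := by
    show Nat.card {L : Submodule F V // finrank F L = 1} = _
    rw [← Nat.card_congr (Projectivization.equivSubmodule F V),
      Projectivization.card_of_finrank_two F V hV]
  have hsub : line '' T ⊆ lines := by
    rintro _ ⟨i, hi, rfl⟩
    exact finrank_span_singleton (hf i hi)
  have hinj : Set.InjOn line T := fun i hi j hj hij => by_contra fun hne =>
    notMem_span_singleton_of_span_pair_eq_top hV (hT hi hj hne)
      (hij ▸ mem_span_singleton_self (f j) : f j ∈ line i)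
  have hcompl : {L : Submodule F V | finrank F L = 1 ∧ ∀ i ∈ T, f i ∉ L} = lines \ line '' T := by
    ext L
    simp only [Set.mem_ofPred_eq, Set.mem_sdiff, Set.mem_image, Finset.mem_coe, not_exists,
      not_and, lines, line]
    refine and_congr_right fun hL => forall₂_congr fun i hi => not_congr ⟨fun hfi => ?_, ?_⟩
    · exact eq_of_le_of_finrank_eq (span_le.2 (Set.singleton_subset_iff.2 hfi))
        (by rw [hL, finrank_span_singleton (hf i hi)])
    · rintro rfl
      exact mem_span_singleton_self (f i)
  have hfin : lines.Finite := Set.finite_of_ncard_pos (by omega)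
  calc Nat.card {L : Submodule F V // finrank F L = 1 ∧ ∀ i ∈ T, f i ∉ L} + T.card
      = (lines \ line '' T).ncard + (line '' T).ncard := by
        rw [← hcompl, hinj.ncard_image, Set.ncard_coe_finset]; rfl
    _ = Nat.card F + 1 := by rw [Set.ncard_sdiff_add_ncard_of_subset hsub hfin, hlines]

variable [FiniteDimensional F V]

theorem Submodule.finrank_comap_mkQ (W : Submodule F V) (L : Submodule F (V ⧸ W)) :
    finrank F (L.comap W.mkQ) = finrank F L + finrank F W := by
  have hcodim : finrank F (V ⧸ L.comap W.mkQ) = finrank F ((V ⧸ W) ⧸ L) := by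
    rw [← (quotientQuotientEquivQuotient W _ (le_comap_mkQ W L)).finrank_eq,
      map_comap_eq_of_surjective W.mkQ_surjective]
  have := (L.comap W.mkQ).finrank_quotient_add_finrank
  have := W.finrank_quotient_add_finrank
  have := L.finrank_quotient_add_finrank
  omega

theorem Submodule.card_hyperplanes_ge_eq_card_quotient (W : Submodule F V) (hW : W ≠ ⊤)
    (P : Submodule F V → Prop) :
    Nat.card {H : Submodule F V // W ≤ H ∧ finrank F H = finrank F V - 1 ∧ P H} =
      Nat.card {L : Submodule F (V ⧸ W) //
        finrank F L = finrank F (V ⧸ W) - 1 ∧ P (L.comap W.mkQ)} := by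
  have hlt := Submodule.finrank_lt hW
  have hsum := W.finrank_quotient_add_finrank
  refine Nat.card_congr ((Equiv.subtypeSubtypeEquivSubtypeInter (W ≤ ·) _).symm.trans
    ((comapMkQRelIso W).toEquiv.subtypeEquiv fun L => ?_).symm)
  show _ ↔ finrank F (L.comap W.mkQ) = _ ∧ _
  rw [finrank_comap_mkQ]
  exact and_congr_left fun _ => by omega

theorem card_hyperplanes_inter_eq_add_card [Finite F] [DecidableEq V]
    (S Y : Finset V) (hYS : Y ⊆ S) (hY : finrank F (span F (Y : Set V)) + 2 = finrank F V)
    (hS : 2 ≤ (S \ Y).card)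
    (hspan : ((S \ Y : Finset V) : Set V).Pairwise fun s t => span F (insert s (insert t Y)) = ⊤) :
    Nat.card {H : Submodule F V // finrank F H = finrank F V - 1 ∧ (Y : Set V) ⊆ H ∧
        (H : Set V) ∩ S = Y} + (S \ Y).card = Nat.card F + 1 := by
  set W := span F (Y : Set V)
  have hQ : finrank F (V ⧸ W) = 2 := by
    have := W.finrank_quotient_add_finrank
    omega
  have hpair : ((S \ Y : Finset V) : Set V).Pairwise fun s t => span F {W.mkQ s, W.mkQ t} = ⊤ :=
    fun s hs t ht hst => span_pair_mkQ_eq_top (hspan hs ht hst)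
  have hnz : ∀ s ∈ S \ Y, W.mkQ s ≠ 0 := by
    intro s hs hs0
    obtain ⟨t, ht, hts⟩ := Finset.exists_mem_ne hS s
    exact notMem_span_singleton_of_span_pair_eq_top hQ (hpair ht hs hts) (hs0 ▸ zero_mem _)
  have hWtop : W ≠ ⊤ := fun h => by
    rw [h, finrank_top] at hY
    omega
  have hcompl (H : Submodule F V) (hYH : (Y : Set V) ⊆ H) :
      (H : Set V) ∩ S = Y ↔ ∀ t ∈ S \ Y, t ∉ H := by
    rw [Set.inter_eq_iff_forall_notMem_sdiff hYH (Finset.coe_subset.2 hYS), ← Finset.coe_sdiff]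
    rfl
  calc _ = Nat.card {H : Submodule F V //
          W ≤ H ∧ finrank F H = finrank F V - 1 ∧ ∀ t ∈ S \ Y, t ∉ H} + (S \ Y).card := by
        refine congrArg (· + _) (Nat.card_congr (Equiv.subtypeEquivRight fun H => ?_))
        constructor
        · rintro ⟨hrank, hYH, hHS⟩
          exact ⟨span_le.2 hYH, hrank, (hcompl H hYH).1 hHS⟩
        · rintro ⟨hWH, hrank, hT⟩
          exact ⟨hrank, span_le.1 hWH, (hcompl H (span_le.1 hWH)).2 hT⟩
    _ = Nat.card {L : Submodule F (V ⧸ W) // finrank F L = 1 ∧ ∀ t ∈ S \ Y, W.mkQ t ∉ L} +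
          (S \ Y).card := by
        rw [W.card_hyperplanes_ge_eq_card_quotient hWtop, hQ]
        rfl
    _ = Nat.card F + 1 := card_lines_notMem_add_card hQ _ _ hnz hpair

end Field

theorem statement3_general (p h k : ℕ) (hk : 2 ≤ k)
    (F : Type) [Field F] [Fintype F] (hF : Fintype.card F = p ^ h)
    (S : Finset (Fin k → F)) (hSk : k ≤ S.card)
    (harc : ∀ A ⊆ S, A.card = k →
      LinearIndependent F (fun v : {x // x ∈ A} => (v : Fin k → F)) ∧
      Submodule.span F (A : Set (Fin k → F)) = ⊤) :
    S.card ≤ p ^ h + k - 1 ∧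
    ∀ Y ⊆ S, Y.card = k - 2 →
      Nat.card {H : Submodule F (Fin k → F) //
          Module.finrank F H = k - 1 ∧ (Y : Set (Fin k → F)) ⊆ H ∧
          ((H : Set (Fin k → F)) ∩ (S : Set (Fin k → F))) = (Y : Set (Fin k → F))} =
        p ^ h + k - 1 - S.card := by
  classical
  have hV : finrank F (Fin k → F) = k := finrank_fin_fun F
  have key (Y : Finset (Fin k → F)) (hYS : Y ⊆ S) (hY : Y.card = k - 2) :
      Nat.card {H : Submodule F (Fin k → F) //
          Module.finrank F H = k - 1 ∧ (Y : Set (Fin k → F)) ⊆ H ∧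
          ((H : Set (Fin k → F)) ∩ (S : Set (Fin k → F))) = (Y : Set (Fin k → F))} +
        (S.card - (k - 2)) = p ^ h + 1 := by
    have hrank := finrank_span_finset_eq_card_of_subset hSk (fun A hAS hA => (harc A hAS hA).1)
      hYS (by omega)
    have hsdiff := Finset.card_sdiff_of_subset hYS
    have := card_hyperplanes_inter_eq_add_card S Y hYS (by omega) (by omega)
      (span_insert_insert_eq_top_of_subset (fun A hAS hA => (harc A hAS hA).2) hYS (by omega))
    rwa [hV, hsdiff, hY, Nat.card_eq_fintype_card (α := F), hF] at this
  obtain ⟨Y₀, hY₀S, hY₀⟩ := Finset.exists_subset_card_eq (show k - 2 ≤ S.card by omega)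
  have := key Y₀ hY₀S hY₀
  refine ⟨by omega, fun Y hYS hY => ?_⟩
  have := key Y hYS hY
  omega

/-- Let `q` be a prime power and let `S` be a finite set of vectors of
`𝔽_q^k` (`k ≥ 2`) with `|S| ≥ k`, such that every subset of `S` of size `k` is a basis of
`𝔽_q^k`.  Then for every subset `Y` of `S` of size `k − 2`, the number of hyperplanes `H`
(i.e. `(k−1)`-dimensional linear subspaces) with `Y ⊆ H` and `H ∩ S = Y` is exactly
`q + k − 1 − |S|`; in particular `|S| ≤ q + k − 1`. -/
theorem statement3 (p h k : ℕ) (hp : p.Prime) (hh : 1 ≤ h) (hk : 2 ≤ k)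
    (F : Type) [Field F] [Fintype F] [DecidableEq F] (hF : Fintype.card F = p ^ h)
    (S : Finset (Fin k → F)) (hSk : k ≤ S.card)
    (harc : ∀ A ⊆ S, A.card = k →
      LinearIndependent F (fun v : {x // x ∈ A} => (v : Fin k → F)) ∧
      Submodule.span F (A : Set (Fin k → F)) = ⊤) :
    S.card ≤ p ^ h + k - 1 ∧
    ∀ Y ⊆ S, Y.card = k - 2 →
      Nat.card {H : Submodule F (Fin k → F) //
          Module.finrank F H = k - 1 ∧ (Y : Set (Fin k → F)) ⊆ H ∧
          ((H : Set (Fin k → F)) ∩ (S : Set (Fin k → F))) = (Y : Set (Fin k → F))} =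
        p ^ h + k - 1 - S.card :=
  statement3_general p h k hk F hF S hSk harc
end

section
/- Let D be a subset of S with |D| = k − 3 and let x, y, z be three distinct elements of S \ D. Then T_{{x} ∪ D}(y) · T_{{y} ∪ D}(z) · T_{{z} ∪ D}(x) = (−1)^{t+1} · T_{{x} ∪ D}(z) · T_{{y} ∪ D}(x) · T_{{z} ∪ D}(y). -/
/-- `detCols L` is the determinant of the `k × k` matrix whose `j`-th column is the
`j`-th entry of the list `L` (lists of length ≠ `k` are padded with `0`). -/
def detCols {F : Type} [CommRing F] {k : ℕ} (L : List (Fin k → F)) : F :=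
  Matrix.det (Matrix.of fun i j : Fin k => L.getD (j : ℕ) 0 i)

/-- The Segre product `P_D(A, B)` of the sequences `A = (a_1, …, a_n)` and
`B = (b_0, …, b_{n−1})` with base `D`, with respect to the family of tangent functions `T`:
`∏_{i=1}^n T_{D ∪ {a_1,…,a_{i−1},b_i,…,b_{n−1}}}(a_i) ·
  T_{D ∪ {a_1,…,a_{i−1},b_i,…,b_{n−1}}}(b_{i−1})⁻¹`. -/
def segreP {F : Type} [Field F] [DecidableEq F] {k : ℕ}
    (T : Finset (Fin k → F) → (Fin k → F) → F)
    (D : Finset (Fin k → F)) (A B : List (Fin k → F)) : F :=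
  ∏ j ∈ Finset.range A.length,
    (T (D ∪ (A.take j).toFinset ∪ (B.drop (j + 1)).toFinset) (A.getD j 0) *
      (T (D ∪ (A.take j).toFinset ∪ (B.drop (j + 1)).toFinset) (B.getD j 0))⁻¹)

/-- `T` is a family of tangent functions for `S` (with `t` tangent hyperplanes through
each subset of size `k − 2`): for every `Y ⊆ S` with `|Y| = k − 2` there is a set `Φ` of
`t` pairwise linearly independent linear forms, each vanishing on `Y` and nonzero at every
vector of `S \ Y`, with `T Y = ∏_{α ∈ Φ} α`. -/
def IsTangentFamily {F : Type} [Field F] [DecidableEq F] {k : ℕ} (t : ℕ)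
    (S : Finset (Fin k → F)) (T : Finset (Fin k → F) → (Fin k → F) → F) : Prop :=
  ∀ Y : Finset (Fin k → F), Y ⊆ S → Y.card = k - 2 →
    ∃ Φ : Finset ((Fin k → F) →ₗ[F] F),
      Φ.card = t ∧
      (∀ α ∈ Φ, ∀ β ∈ Φ, α ≠ β → ∀ c : F, α ≠ c • β) ∧
      (∀ α ∈ Φ, ∀ y ∈ Y, α y = 0) ∧
      (∀ α ∈ Φ, ∀ s ∈ S, s ∉ Y → α s ≠ 0) ∧
      (∀ x, T Y x = ∏ α ∈ Φ, α x)

/-- The subsequence of `L` consisting of the entries whose positions lie in `s`,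
in their original order (`d` is a default value). -/
def subseq {α : Type} (d : α) (L : List α) (s : Finset ℕ) : List α :=
  ((List.range L.length).filter (fun i => decide (i ∈ s))).map (fun i => L.getD i d)

/-- The subsequence of `L` consisting of the entries whose positions do not lie in `s`,
in their original order (`d` is a default value). -/
def subseqC {α : Type} (d : α) (L : List α) (s : Finset ℕ) : List α :=
  ((List.range L.length).filter (fun i => decide (i ∉ s))).map (fun i => L.getD i d)

/-- The number of transpositions needed (counted as the number of inversions) to reorder a
list of length `len` so that the entries in positions `s` occupy the last `|s|` positions,
preserving the relative order of the two groups. -/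
def invCount (s : Finset ℕ) (len : ℕ) : ℕ :=
  ((Finset.range len ×ˢ Finset.range len).filter
    (fun ij => ij.1 ∈ s ∧ ij.2 ∉ s ∧ ij.1 < ij.2)).card

/-!
Fix `Y = D ∪ {x}`. The linear forms vanishing on `Y` make up a plane, in which a form `α` is
determined up to a scalar by the ratio `α y / α z`. The `t` tangent forms at `Y` and the forms
`w ↦ det (w, x, s, D)` for the `|S| - k` points `s ∈ S \ (D ∪ {x, y, z})` are pairwise
non-proportional, and there are `q - 1` of them; so their ratios run once over `𝔽_q^*` and
multiply to `-1`. This gives `T_Y(y) ∏ₛ det (y, x, s, D) = -T_Y(z) ∏ₛ det (z, x, s, D)`.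
Multiplying the three cyclic instances, the determinant products cancel up to the sign
`(-1)^(|S| - k)`, which equals `(-1)^t` because `t + (|S| - k) = q - 1` and `(-1)^(q-1) = 1`.
-/

open Finset Matrix Function

theorem Finset.exists_injective_range_eq {α : Type*} {D : Finset α} {n : ℕ} (h : #D = n) :
    ∃ d : Fin n → α, Injective d ∧ Set.range d = D :=
  ⟨fun i => (D.equivFinOfCardEq h).symm i, Subtype.val_injective.comp (Equiv.injective _),
    Set.ext fun v => ⟨by rintro ⟨i, rfl⟩; exact Subtype.prop _,
      fun hv => ⟨D.equivFinOfCardEq h ⟨v, hv⟩, by simp⟩⟩⟩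

theorem Finset.card_eq_of_injective_range_eq {α : Type*} {n : ℕ} {d : Fin n → α}
    {D : Finset α} (hd : Injective d) (hdD : Set.range d = D) : #D = n := by
  rw [← Set.ncard_coe_finset, ← hdD, Set.ncard_range_of_injective hd, Nat.card_eq_fintype_card,
    Fintype.card_fin]

theorem Finset.card_insert_insert_insert {α : Type*} [DecidableEq α] {x y z : α} {D : Finset α}
    (hxD : x ∉ D) (hyD : y ∉ D) (hzD : z ∉ D) (hxy : x ≠ y) (hyz : y ≠ z) (hxz : x ≠ z) :
    #(insert x (insert y (insert z D))) = #D + 3 := by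
  rw [card_insert_of_notMem (by simp [*]), card_insert_of_notMem (by simp [*]),
    card_insert_of_notMem hzD]

theorem ne_and_notMem_range_of_notMem_insert {α ι : Type*} [DecidableEq α] {d : ι → α}
    {D : Finset α} (hdD : Set.range d = D) {x v : α} (hv : v ∉ insert x D) :
    v ≠ x ∧ v ∉ Set.range d := by
  rw [hdD]
  simpa [not_or] using hv

theorem FiniteField.prod_erase_zero_eq_neg_one {F : Type*} [Field F] [Fintype F] [DecidableEq F] :
    ∏ a ∈ univ.erase (0 : F), a = -1 := by
  have himage : univ.erase (0 : F) = univ.image ((↑) : Fˣ → F) := by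
    ext a
    simpa using ⟨fun h => ⟨Units.mk0 a h, rfl⟩, by rintro ⟨u, rfl⟩; exact u.ne_zero⟩
  rw [himage, prod_image Units.val_injective.injOn, ← Units.coe_prod,
    prod_univ_units_id_eq_neg_one, Units.val_neg, Units.val_one]

theorem FiniteField.neg_one_pow_eq_of_add_add_one_eq {F : Type*} [Field F] [Fintype F] {a b : ℕ}
    (h : a + b + 1 = Fintype.card F) : (-1 : F) ^ a = (-1) ^ b := by
  have hab : (-1 : F) ^ a * (-1) ^ b = 1 := by
    rw [← pow_add, show a + b = Fintype.card F - 1 by omega]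
    exact FiniteField.pow_card_sub_one_eq_one _ (neg_ne_zero.mpr one_ne_zero)
  rw [eq_inv_of_mul_eq_one_left hab, ← inv_pow, inv_neg_one]

section LinearForms

variable {F V : Type*} [Field F] [AddCommGroup V] [Module F V]

theorem LinearMap.eq_smul_of_mul_eq_mul {P : Set V} {y z : V}
    (hspan : Submodule.span F (insert y (insert z P)) = ⊤) {f g : V →ₗ[F] F}
    (hf : ∀ v ∈ P, f v = 0) (hg : ∀ v ∈ P, g v = 0) (hfz : f z ≠ 0)
    (h : f y * g z = g y * f z) : g = (g z / f z) • f := by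
  refine LinearMap.ext_on hspan fun v hv => ?_
  rw [LinearMap.smul_apply, smul_eq_mul]
  rcases hv with rfl | rfl | hv
  · field_simp
    linear_combination -h
  · field_simp
  · rw [hf v hv, hg v hv, mul_zero]

/-- The ratios `f i y / f i z` are pairwise distinct elements of `Fˣ`, and there are
`|F| - 1` of them. -/
theorem prod_div_eq_neg_one_of_not_proportional [Fintype F] [DecidableEq F] {ι : Type*}
    {P : Set V} {y z : V} (hspan : Submodule.span F (insert y (insert z P)) = ⊤)
    {s : Finset ι} {f : ι → V →ₗ[F] F} (hcard : #s + 1 = Fintype.card F)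
    (hvanish : ∀ i ∈ s, ∀ v ∈ P, f i v = 0) (hy : ∀ i ∈ s, f i y ≠ 0)
    (hz : ∀ i ∈ s, f i z ≠ 0)
    (hprop : ∀ i ∈ s, ∀ j ∈ s, i ≠ j → ∀ c : F, c ≠ 0 → f i ≠ c • f j) :
    ∏ i ∈ s, f i y / f i z = -1 := by
  set ratio := fun i => f i y / f i z
  have hinj : Set.InjOn ratio s := by
    intro i hi j hj hij
    by_contra hne
    refine hprop j hj i hi (Ne.symm hne) _ (div_ne_zero (hz j hj) (hz i hi)) ?_
    exact LinearMap.eq_smul_of_mul_eq_mul hspan (hvanish i hi) (hvanish j hj) (hz i hi)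
      ((div_eq_div_iff (hz i hi) (hz j hj)).mp hij)
  have himage : s.image ratio = univ.erase 0 := by
    refine eq_of_subset_of_card_le (fun a ha => ?_) ?_
    · obtain ⟨i, hi, rfl⟩ := mem_image.mp ha
      exact mem_erase.mpr ⟨div_ne_zero (hy i hi) (hz i hi), mem_univ _⟩
    · rw [card_image_of_injOn hinj, card_erase_of_mem (mem_univ _), card_univ]
      omega
  calc ∏ i ∈ s, ratio i = ∏ a ∈ s.image ratio, a := (prod_image (f := fun a => a) hinj).symm
    _ = -1 := by rw [himage, FiniteField.prod_erase_zero_eq_neg_one]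

end LinearForms

def IsArc {F : Type*} [Field F] {k : ℕ} (S : Finset (Fin k → F)) : Prop :=
  ∀ A ⊆ S, A.card = k →
    LinearIndependent F (fun v : {x // x ∈ A} => (v : Fin k → F)) ∧
      Submodule.span F (A : Set (Fin k → F)) = ⊤

theorem IsArc.det_ne_zero {F : Type*} [Field F] {k : ℕ} {S : Finset (Fin k → F)} (hS : IsArc S)
    {v : Fin k → Fin k → F} (hv : Injective v) (hvS : ∀ i, v i ∈ S) : (of v).det ≠ 0 := by
  classical
  have hsub : univ.image v ⊆ S := fun a ha => by
    obtain ⟨i, -, rfl⟩ := mem_image.mp ha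
    exact hvS i
  have hindep := (hS _ hsub (by rw [card_image_of_injective _ hv, card_univ, Fintype.card_fin])).1
  have hv_indep : LinearIndependent F v :=
    hindep.comp (fun i => ⟨v i, mem_image_of_mem v (mem_univ i)⟩) fun i j hij =>
      hv (congrArg Subtype.val hij)
  exact ((isUnit_iff_isUnit_det _).mp (linearIndependent_rows_iff_isUnit.mp hv_indep)).ne_zero

section DetForm

variable {F : Type*} [Field F] {n : ℕ}

/-- The linear form `w ↦ det (w, b, c, d₁, …, dₙ)`, the vectors being the rows. -/
def detForm (d : Fin n → Fin (n + 3) → F) (b c : Fin (n + 3) → F) :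
    (Fin (n + 3) → F) →ₗ[F] F :=
  (detRowAlternating : (Fin (n + 3) → F) [⋀^Fin (n + 3)]→ₗ[F] F).toMultilinearMap.toLinearMap
    (vecCons 0 (vecCons b (vecCons c d))) 0

variable (d : Fin n → Fin (n + 3) → F) (b c : Fin (n + 3) → F)

theorem detForm_apply (w : Fin (n + 3) → F) :
    detForm d b c w = (of (vecCons w (vecCons b (vecCons c d)))).det := by
  rw [detForm, MultilinearMap.toLinearMap_apply]
  exact congrArg _ (Fin.update_cons_zero _ _ _)

theorem detForm_apply_left : detForm d b c b = 0 := by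
  rw [detForm_apply]
  exact det_zero_of_row_eq (i := 0) (j := 1) (by simp) rfl

theorem detForm_apply_right : detForm d b c c = 0 := by
  rw [detForm_apply]
  exact det_zero_of_row_eq (i := 0) (j := Fin.succ 1) (Fin.succ_ne_zero _).symm rfl

theorem detForm_apply_of_mem_range {v : Fin (n + 3) → F} (hv : v ∈ Set.range d) :
    detForm d b c v = 0 := by
  obtain ⟨i, rfl⟩ := hv
  rw [detForm_apply]
  exact det_zero_of_row_eq (i := 0) (j := i.succ.succ.succ) (Fin.succ_ne_zero _).symm rfl

theorem detForm_apply_comm (w : Fin (n + 3) → F) : detForm d b c w = -detForm d w c b := by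
  have hswap : vecCons b (vecCons w (vecCons c d)) ∘ Equiv.swap 0 1 =
      vecCons w (vecCons b (vecCons c d)) := by
    funext i
    refine Fin.cases ?_ (Fin.cases ?_ fun j => ?_) i <;>
      simp [Equiv.swap_apply_of_ne_of_ne, Fin.succ_succ_ne_one]
  rw [detForm_apply, detForm_apply, ← hswap]
  exact (detRowAlternating : (Fin (n + 3) → F) [⋀^Fin (n + 3)]→ₗ[F] F).map_swap
    (vecCons b (vecCons w (vecCons c d))) (i := 0) (j := 1) (by simp)

theorem prod_detForm_comm (a : Fin (n + 3) → F) (M : Finset (Fin (n + 3) → F)) :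
    ∏ s ∈ M, detForm d b s a = (-1) ^ #M * ∏ s ∈ M, detForm d a s b := by
  simp_rw [detForm_apply_comm d b _ a]
  exact prod_neg _

variable {S : Finset (Fin (n + 3) → F)} {d}

theorem IsArc.detForm_ne_zero (hS : IsArc S) (hd : Injective d) (hdS : ∀ i, d i ∈ S)
    {w b c : Fin (n + 3) → F} (hw : w ∈ S) (hb : b ∈ S) (hc : c ∈ S)
    (hwd : w ∉ Set.range d) (hbd : b ∉ Set.range d) (hcd : c ∉ Set.range d)
    (hwb : w ≠ b) (hwc : w ≠ c) (hbc : b ≠ c) : detForm d b c w ≠ 0 := by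
  rw [detForm_apply]
  refine hS.det_ne_zero ?_ fun i => Fin.cases hw (Fin.cases hb (Fin.cases hc hdS)) i
  refine Fin.cons_injective_iff.mpr ⟨?_, Fin.cons_injective_iff.mpr
    ⟨?_, Fin.cons_injective_iff.mpr ⟨hcd, hd⟩⟩⟩ <;>
  simp [Matrix.range_cons, hwb, hwc, hwd, hbc, hbd]

theorem IsArc.prod_detForm_ne_zero (hS : IsArc S) (hd : Injective d) (hdS : ∀ i, d i ∈ S)
    {a b : Fin (n + 3) → F} (ha : a ∈ S) (hb : b ∈ S) (had : a ∉ Set.range d)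
    (hbd : b ∉ Set.range d) (hab : a ≠ b) {M : Finset (Fin (n + 3) → F)} (hMS : M ⊆ S)
    (hMd : ∀ s ∈ M, s ∉ Set.range d) (haM : a ∉ M) (hbM : b ∉ M) :
    ∏ s ∈ M, detForm d a s b ≠ 0 :=
  prod_ne_zero_iff.mpr fun s hs => hS.detForm_ne_zero hd hdS hb ha (hMS hs) hbd had (hMd s hs)
    hab.symm (fun h => hbM (h ▸ hs)) (fun h => haM (h ▸ hs))

end DetForm

theorem mul_mul_eq_neg_mul_of_cyclic {K : Type*} [Field K] {a b c a' b' c' A B C ε : K}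
    (hA : A ≠ 0) (hB : B ≠ 0) (hC : C ≠ 0) (hε : ε * ε = 1) (h₁ : a * A = -(a' * (ε * C)))
    (h₂ : b * B = -(b' * (ε * A))) (h₃ : c * C = -(c' * (ε * B))) :
    a * b * c = -ε * (a' * b' * c') := by
  refine mul_right_cancel₀ (mul_ne_zero (mul_ne_zero hA hB) hC) ?_
  linear_combination (b * B * (c * C)) * h₁ - a' * (ε * C) * (c * C) * h₂
    + a' * (ε * C) * (b' * (ε * A)) * h₃ - ε * (a' * b' * c') * A * B * C * hε

section Tangent

variable {F : Type} [Field F] [DecidableEq F] {n : ℕ} {S D M : Finset (Fin (n + 3) → F)}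
  {d : Fin n → Fin (n + 3) → F} {x : Fin (n + 3) → F}
  {Φ : Finset ((Fin (n + 3) → F) →ₗ[F] F)}

theorem sumElim_detForm_apply_eq_zero (hdD : Set.range d = D)
    (hΦ : ∀ α ∈ Φ, ∀ v ∈ insert x D, α v = 0) :
    ∀ i ∈ Φ.disjSum M, ∀ v ∈ insert x D, Sum.elim id (detForm d x) i v = 0 := by
  rintro (α | s) hi v hv
  · exact hΦ α (inl_mem_disjSum.mp hi) v hv
  · rcases mem_insert.mp hv with rfl | hv
    · exact detForm_apply_left d v s
    · exact detForm_apply_of_mem_range d x s (hdD ▸ hv)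

theorem sumElim_detForm_apply_ne_zero (hS : IsArc S) (hd : Injective d) (hdS : ∀ i, d i ∈ S)
    (hdD : Set.range d = D) (hx : x ∈ S) (hxD : x ∉ D)
    (hΦ : ∀ α ∈ Φ, ∀ s ∈ S, s ∉ insert x D → α s ≠ 0) (hMS : M ⊆ S)
    (hMD : ∀ s ∈ M, s ∉ insert x D) {w : Fin (n + 3) → F} (hw : w ∈ S)
    (hwY : w ∉ insert x D) (hwM : w ∉ M) :
    ∀ i ∈ Φ.disjSum M, Sum.elim id (detForm d x) i w ≠ 0 := by
  rintro (α | s) hi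
  · exact hΦ α (inl_mem_disjSum.mp hi) w hw hwY
  · have hs := inr_mem_disjSum.mp hi
    obtain ⟨hwx, hwd⟩ := ne_and_notMem_range_of_notMem_insert hdD hwY
    obtain ⟨hsx, hsd⟩ := ne_and_notMem_range_of_notMem_insert hdD (hMD s hs)
    exact hS.detForm_ne_zero hd hdS hw hx (hMS hs) hwd (by rwa [hdD]) hsd hwx
      (fun h => hwM (h ▸ hs)) hsx.symm

/-- `detForm d x s` vanishes at `s`, where no other form of the family does. -/
theorem sumElim_detForm_not_proportional (hS : IsArc S) (hd : Injective d) (hdS : ∀ i, d i ∈ S)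
    (hdD : Set.range d = D) (hx : x ∈ S) (hxD : x ∉ D)
    (hΦprop : ∀ α ∈ Φ, ∀ β ∈ Φ, α ≠ β → ∀ c : F, α ≠ c • β)
    (hΦ : ∀ α ∈ Φ, ∀ s ∈ S, s ∉ insert x D → α s ≠ 0) (hMS : M ⊆ S)
    (hMD : ∀ s ∈ M, s ∉ insert x D) :
    ∀ i ∈ Φ.disjSum M, ∀ j ∈ Φ.disjSum M, i ≠ j → ∀ c : F, c ≠ 0 →
      Sum.elim id (detForm d x) i ≠ c • Sum.elim id (detForm d x) j := by
  rintro (α | s) hi (α' | s') hj hne c hc heq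
  · exact hΦprop α (inl_mem_disjSum.mp hi) α' (inl_mem_disjSum.mp hj) (by simpa using hne) c heq
  · have hs' := inr_mem_disjSum.mp hj
    have hα := LinearMap.congr_fun heq s'
    simp only [Sum.elim_inl, Sum.elim_inr, id, LinearMap.smul_apply, detForm_apply_right,
      smul_zero] at hα
    exact hΦ α (inl_mem_disjSum.mp hi) s' (hMS hs') (hMD s' hs') hα
  · have hs := inr_mem_disjSum.mp hi
    have hα := LinearMap.congr_fun heq s
    simp only [Sum.elim_inl, Sum.elim_inr, id, LinearMap.smul_apply, detForm_apply_right,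
      smul_eq_mul, zero_eq_mul, hc, false_or] at hα
    exact hΦ α' (inl_mem_disjSum.mp hj) s (hMS hs) (hMD s hs) hα
  · have hs := inr_mem_disjSum.mp hi
    have hs' := inr_mem_disjSum.mp hj
    obtain ⟨hsx, hsd⟩ := ne_and_notMem_range_of_notMem_insert hdD (hMD s hs)
    obtain ⟨hs'x, hs'd⟩ := ne_and_notMem_range_of_notMem_insert hdD (hMD s' hs')
    have hβ := LinearMap.congr_fun heq s'
    simp only [Sum.elim_inr, LinearMap.smul_apply, detForm_apply_right, smul_zero] at hβ
    exact hS.detForm_ne_zero hd hdS (hMS hs') hx (hMS hs) hs'd (by rwa [hdD]) hsd hs'x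
      (fun h => hne (by rw [h])) hsx.symm hβ

theorem tangent_mul_prod_detForm_eq_neg [Fintype F] {t : ℕ}
    {T : Finset (Fin (n + 3) → F) → (Fin (n + 3) → F) → F} (hS : IsArc S)
    (hT : IsTangentFamily t S T) (hd : Injective d) (hdD : Set.range d = D) (hDS : D ⊆ S)
    {y z : Fin (n + 3) → F} (hx : x ∈ S) (hy : y ∈ S) (hz : z ∈ S)
    (hxD : x ∉ D) (hyD : y ∉ D) (hzD : z ∉ D) (hxy : x ≠ y) (hyz : y ≠ z) (hxz : x ≠ z)
    {E : Finset (Fin (n + 3) → F)} (hE : insert x (insert y (insert z D)) = E)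
    (hcard : #(S \ E) + t + 1 = Fintype.card F) :
    T (insert x D) y * ∏ s ∈ S \ E, detForm d x s y =
      -(T (insert x D) z * ∏ s ∈ S \ E, detForm d x s z) := by
  have hDcard := card_eq_of_injective_range_eq hd hdD
  have hdS : ∀ i, d i ∈ S := fun i => hDS (hdD ▸ Set.mem_range_self i : d i ∈ (D : Set _))
  have hspan : Submodule.span F (insert y (insert z ↑(insert x D))) = ⊤ := by
    have hES : E ⊆ S := hE ▸ by simp [insert_subset_iff, hx, hy, hz, hDS]
    have hEcard : #E = n + 3 := by
      rw [← hE, card_insert_insert_insert hxD hyD hzD hxy hyz hxz, hDcard]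
    rw [← (hS E hES hEcard).2, ← hE]
    push_cast
    rw [Set.insert_comm z x, Set.insert_comm y x]
  obtain ⟨Φ, hΦcard, hΦprop, hΦzero, hΦne, hTΦ⟩ :=
    hT (insert x D) (insert_subset hx hDS) (by rw [card_insert_of_notMem hxD, hDcard]; rfl)
  have hMD : ∀ s ∈ S \ E, s ∉ insert x D := fun s hs => by
    simp only [← hE, mem_sdiff, mem_insert, not_or] at hs ⊢
    tauto
  have hyY : y ∉ insert x D := by simp [hyD, Ne.symm hxy]
  have hzY : z ∉ insert x D := by simp [hzD, Ne.symm hxz]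
  have hnonzero {w} (hw : w ∈ S) (hwY : w ∉ insert x D) (hwM : w ∉ S \ E) :=
    sumElim_detForm_apply_ne_zero hS hd hdS hdD hx hxD hΦne sdiff_subset hMD hw hwY hwM
  have key := prod_div_eq_neg_one_of_not_proportional hspan
    (by rw [card_disjSum, hΦcard]; omega) (sumElim_detForm_apply_eq_zero hdD hΦzero)
    (hnonzero hy hyY (by simp [← hE])) (hnonzero hz hzY (by simp [← hE]))
    (sumElim_detForm_not_proportional hS hd hdS hdD hx hxD hΦprop hΦne sdiff_subset hMD)
  rw [prod_disjSum, prod_div_distrib, prod_div_distrib] at key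
  simp only [Sum.elim_inl, Sum.elim_inr, id, ← hTΦ] at key
  have hTz : T (insert x D) z ≠ 0 := hTΦ z ▸ prod_ne_zero_iff.mpr fun α hα =>
    hnonzero hz hzY (by simp [← hE]) (.inl α) (inl_mem_disjSum.mpr hα)
  have hPz : ∏ s ∈ S \ E, detForm d x s z ≠ 0 := prod_ne_zero_iff.mpr fun s hs =>
    hnonzero hz hzY (by simp [← hE]) (.inr s) (inr_mem_disjSum.mpr hs)
  field_simp at key
  linear_combination key

theorem tangent_cyclic_mul_eq [Fintype F] {t : ℕ}
    {T : Finset (Fin (n + 3) → F) → (Fin (n + 3) → F) → F} (hS : IsArc S)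
    (hT : IsTangentFamily t S T) (hcard : #S + t = Fintype.card F + n + 2) (hd : Injective d)
    (hdD : Set.range d = D) (hDS : D ⊆ S) {y z : Fin (n + 3) → F} (hx : x ∈ S) (hy : y ∈ S)
    (hz : z ∈ S) (hxD : x ∉ D) (hyD : y ∉ D) (hzD : z ∉ D) (hxy : x ≠ y) (hyz : y ≠ z)
    (hxz : x ≠ z) :
    T (insert x D) y * T (insert y D) z * T (insert z D) x =
      (-1 : F) ^ (t + 1) * (T (insert x D) z * T (insert y D) x * T (insert z D) y) := by
  set M := S \ insert x (insert y (insert z D))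
  have hMcard : #M + t + 1 = Fintype.card F := by
    have hES : insert x (insert y (insert z D)) ⊆ S := by
      simp [insert_subset_iff, hx, hy, hz, hDS]
    have hEcard := card_insert_insert_insert hxD hyD hzD hxy hyz hxz
    have hDcard := card_eq_of_injective_range_eq hd hdD
    have hES_card := card_le_card hES
    rw [card_sdiff_of_subset hES]
    omega
  have h₁ := tangent_mul_prod_detForm_eq_neg hS hT hd hdD hDS hx hy hz hxD hyD hzD hxy hyz hxz
    rfl hMcard
  have h₂ := tangent_mul_prod_detForm_eq_neg hS hT hd hdD hDS hy hz hx hyD hzD hxD hyz hxz.symm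
    hxy.symm (by rw [insert_comm z x, insert_comm y x]) hMcard
  have h₃ := tangent_mul_prod_detForm_eq_neg hS hT hd hdD hDS hz hx hy hzD hxD hyD hxz.symm hxy
    hyz.symm (by rw [insert_comm z x, insert_comm z y]) hMcard
  rw [prod_detForm_comm d x z] at h₁
  rw [prod_detForm_comm d y x] at h₂
  rw [prod_detForm_comm d z y] at h₃
  have hdS : ∀ i, d i ∈ S := fun i => hDS (hdD ▸ Set.mem_range_self i : d i ∈ (D : Set _))
  have hMd : ∀ s ∈ M, s ∉ Set.range d := fun s hs => by simp_all [M]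
  have hxd : x ∉ Set.range d := by rwa [hdD]
  have hyd : y ∉ Set.range d := by rwa [hdD]
  have hzd : z ∉ Set.range d := by rwa [hdD]
  have hxM : x ∉ M := by simp [M]
  have hyM : y ∉ M := by simp [M]
  have hzM : z ∉ M := by simp [M]
  rw [pow_succ', neg_one_mul, ← FiniteField.neg_one_pow_eq_of_add_add_one_eq hMcard]
  exact mul_mul_eq_neg_mul_of_cyclic
    (hS.prod_detForm_ne_zero hd hdS hx hy hxd hyd hxy sdiff_subset hMd hxM hyM)
    (hS.prod_detForm_ne_zero hd hdS hy hz hyd hzd hyz sdiff_subset hMd hyM hzM)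
    (hS.prod_detForm_ne_zero hd hdS hz hx hzd hxd hxz.symm sdiff_subset hMd hzM hxM)
    (by rw [← mul_pow, neg_one_mul, neg_neg, one_pow]) h₁ h₂ h₃

end Tangent

theorem statement4_general (k q t : ℕ)
    (hk : 3 ≤ k)
    (F : Type) [Field F] [Fintype F] [DecidableEq F] (hF : Fintype.card F = q)
    (S : Finset (Fin k → F))
    (harc : ∀ A ⊆ S, A.card = k →
      LinearIndependent F (fun v : {x // x ∈ A} => (v : Fin k → F)) ∧
      Submodule.span F (A : Set (Fin k → F)) = ⊤)
    (ht : S.card + t = q + k - 1)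
    (T : Finset (Fin k → F) → (Fin k → F) → F) (hT : IsTangentFamily t S T)
    (D : Finset (Fin k → F)) (hD : D ⊆ S) (hDcard : D.card = k - 3)
    (x y z : Fin k → F) (hx : x ∈ S) (hy : y ∈ S) (hz : z ∈ S)
    (hxD : x ∉ D) (hyD : y ∉ D) (hzD : z ∉ D)
    (hxy : x ≠ y) (hyz : y ≠ z) (hxz : x ≠ z) :
    T (insert x D) y * T (insert y D) z * T (insert z D) x =
      (-1 : F) ^ (t + 1) * (T (insert x D) z * T (insert y D) x * T (insert z D) y) := by
  obtain ⟨n, rfl⟩ : ∃ n, k = n + 3 := ⟨k - 3, by omega⟩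
  obtain ⟨d, hd, hdD⟩ := exists_injective_range_eq (show #D = n by omega)
  exact tangent_cyclic_mul_eq harc hT (by omega) hd hdD hD hx hy hz hxD hyD hzD hxy hyz hxz

/-- Segre's lemma of tangents: for `D ⊆ S` with `|D| = k − 3` and distinct
`x, y, z ∈ S \ D`:
`T_{{x}∪D}(y) T_{{y}∪D}(z) T_{{z}∪D}(x) = (−1)^{t+1} T_{{x}∪D}(z) T_{{y}∪D}(x) T_{{z}∪D}(y)`. -/
theorem statement4 (p h k q t : ℕ) (hp : p.Prime) (hh : 1 ≤ h) (hq : q = p ^ h)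
    (hk : 3 ≤ k)
    (F : Type) [Field F] [Fintype F] [DecidableEq F] (hF : Fintype.card F = q)
    (S : Finset (Fin k → F))
    (harc : ∀ A ⊆ S, A.card = k →
      LinearIndependent F (fun v : {x // x ∈ A} => (v : Fin k → F)) ∧
      Submodule.span F (A : Set (Fin k → F)) = ⊤)
    (ht : S.card + t = q + k - 1) (ht1 : 1 ≤ t) (hSk : k ≤ S.card)
    (T : Finset (Fin k → F) → (Fin k → F) → F) (hT : IsTangentFamily t S T)
    (D : Finset (Fin k → F)) (hD : D ⊆ S) (hDcard : D.card = k - 3)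
    (x y z : Fin k → F) (hx : x ∈ S) (hy : y ∈ S) (hz : z ∈ S)
    (hxD : x ∉ D) (hyD : y ∉ D) (hzD : z ∉ D)
    (hxy : x ≠ y) (hyz : y ≠ z) (hxz : x ≠ z) :
    T (insert x D) y * T (insert y D) z * T (insert z D) x =
      (-1 : F) ^ (t + 1) * (T (insert x D) z * T (insert y D) x * T (insert z D) y) :=
  statement4_general k q t hk F hF S harc ht T hT D hD hDcard x y z hx hy hz hxD hyD hzD hxy hyz hxz
end

section
/- Assume |S| ≥ k + t. Let Y be an ordered subset of S of size k − 2 and E a subset of S of size t + 2 with Y ∩ E = ∅. Then 0 = ∑_{a ∈ E} T_Y(a) · ∏_{z ∈ E \ {a}} det(z, a, Y)^{−1}. -/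
/-!
Both `T_Y` and `D(z, a) = det(z, a, Y)` only depend on the images of their arguments in the
plane `F^k / ⟨Y⟩`, so the claim is a Lagrange-interpolation identity on the projective line:
a product of `t` linear forms has vanishing interpolation sum over `t + 2` points. This only
needs `D` alternating and every factor `α` satisfying the three-term relation
`α x · D(v, w) = α v · D(x, w) - α w · D(x, v)`, which is Cramer's rule for `x` in the columns
of `(v, w, Y)` since `α` kills `Y`. Writing one factor `α a` as a combination of `D(a, w)` and
`D(a, v)`, the factor `D(a, w)` cancels `D(w, a)⁻¹` and leaves the same sum over `E \ {w}` with
one factor fewer, so induction on `t` applies.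
-/

open Finset

section Interpolation

variable {V F ι : Type*} [Field F] [DecidableEq V] {D : V → V → F}

def interpolationSum (D : V → V → F) (E : Finset V) (g : V → F) : F :=
  ∑ a ∈ E, g a * ∏ z ∈ E.erase a, (D z a)⁻¹

theorem interpolationSum_mul_eq_neg (hanti : ∀ x y, D x y = -D y x) (hzero : ∀ x, D x x = 0)
    {E : Finset V} (hD : ∀ x ∈ E, ∀ y ∈ E, x ≠ y → D x y ≠ 0) (g : V → F) {w : V} (hw : w ∈ E) :
    interpolationSum D E (fun a => D a w * g a) = -interpolationSum D (E.erase w) g := by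
  rw [interpolationSum, ← add_sum_erase _ _ hw, hzero, zero_mul, zero_mul, zero_add,
    interpolationSum, ← sum_neg_distrib]
  refine sum_congr rfl fun a ha => ?_
  obtain ⟨haw, haE⟩ := mem_erase.mp ha
  have hwa : w ∈ E.erase a := mem_erase.mpr ⟨haw.symm, hw⟩
  rw [hanti a w, ← mul_prod_erase _ _ hwa, erase_right_comm]
  field_simp [hD w hw a haE haw.symm]

theorem interpolationSum_pair_one (hanti : ∀ x y, D x y = -D y x) {x y : V} (hxy : x ≠ y) :
    interpolationSum D {x, y} (fun _ => 1) = 0 := by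
  have hyx : y ∉ ({x} : Finset V) := by simpa using hxy.symm
  rw [interpolationSum, sum_pair hxy, erase_insert (by simpa using hxy), pair_comm,
    erase_insert hyx]
  simp only [one_mul, prod_singleton, hanti y x, inv_neg, neg_add_cancel]

theorem interpolationSum_prod_eq_zero (hanti : ∀ x y, D x y = -D y x)
    (hzero : ∀ x, D x x = 0) (f : ι → V → F) (Φ : Finset ι)
    (hf : ∀ i ∈ Φ, ∀ x v w, f i x * D v w = f i v * D x w - f i w * D x v)
    (E : Finset V) (hE : E.card = Φ.card + 2) (hD : ∀ x ∈ E, ∀ y ∈ E, x ≠ y → D x y ≠ 0) :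
    interpolationSum D E (fun a => ∏ i ∈ Φ, f i a) = 0 := by
  classical
  induction Φ using Finset.induction_on generalizing E with
  | empty =>
    obtain ⟨x, y, hxy, rfl⟩ := card_eq_two.mp hE
    simpa using interpolationSum_pair_one hanti hxy
  | insert β Φ hβ ih =>
    rw [card_insert_of_notMem hβ] at hE
    obtain ⟨v, hv, w, hw, hvw⟩ := one_lt_card.mp (show 1 < E.card by omega)
    have hvanish : ∀ u ∈ E,
        interpolationSum D E (fun a => D a u * ∏ i ∈ Φ, f i a) = 0 := fun u hu => by
      rw [interpolationSum_mul_eq_neg hanti hzero hD _ hu, neg_eq_zero]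
      exact ih (fun i hi => hf i (mem_insert_of_mem hi)) _
        (by rw [card_erase_of_mem hu]; omega)
        fun x hx y hy => hD x (mem_of_mem_erase hx) y (mem_of_mem_erase hy)
    have hβa : ∀ a, f β a = (D v w)⁻¹ * (f β v * D a w - f β w * D a v) := fun a => by
      rw [← hf β (mem_insert_self β Φ) a v w]
      field_simp [hD v hv w hw hvw]
    have hsplit : interpolationSum D E (fun a => ∏ i ∈ insert β Φ, f i a) =
        (D v w)⁻¹ * (f β v * interpolationSum D E (fun a => D a w * ∏ i ∈ Φ, f i a) -
          f β w * interpolationSum D E (fun a => D a v * ∏ i ∈ Φ, f i a)) := by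
      simp only [interpolationSum, mul_sum, ← sum_sub_distrib]
      refine sum_congr rfl fun a _ => ?_
      rw [prod_insert hβ, hβa a]
      ring
    rw [hsplit, hvanish w hw, hvanish v hv]
    ring

end Interpolation

theorem Matrix.apply_mul_det_eq_sum_det_updateCol {n R : Type*} [Fintype n] [DecidableEq n]
    [CommRing R] (A : Matrix n n R) (α : (n → R) →ₗ[R] R) (x : n → R) :
    α x * A.det = ∑ j, α (A.col j) * (A.updateCol j x).det := by
  have h := congrArg α (A.mulVec_cramer x)
  rw [map_smul, smul_eq_mul, Matrix.mulVec_eq_sum, map_sum] at h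
  rw [mul_comm, ← h]
  refine sum_congr rfl fun j _ => ?_
  rw [op_smul_eq_smul, map_smul, smul_eq_mul, Matrix.cramer_apply, mul_comm]
  rfl

section detCols

variable {R : Type} [CommRing R] {m : ℕ}

theorem detCols_eq_det (L : List (Fin m → R)) :
    detCols L = (Matrix.of fun i j : Fin m => L.getD (j : ℕ) 0 i).det := rfl

theorem detCols_cons_cons_self (x : Fin (m + 2) → R) (L : List (Fin (m + 2) → R)) :
    detCols (x :: x :: L) = 0 :=
  Matrix.det_zero_of_column_eq (i := 0) (j := 1) (by simp) fun _ => rfl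

theorem detCols_cons_cons_swap (x y : Fin (m + 2) → R) (L : List (Fin (m + 2) → R)) :
    detCols (x :: y :: L) = -detCols (y :: x :: L) := by
  have hswap : (Matrix.of fun i j : Fin (m + 2) => (x :: y :: L).getD j 0 i) =
      (Matrix.of fun i j : Fin (m + 2) => (y :: x :: L).getD j 0 i).submatrix id
        (Equiv.swap 0 1) := by
    ext i j
    induction j using Fin.cases with
    | zero => simp
    | succ j =>
      induction j using Fin.cases with
      | zero => simp
      | succ j => simp [Equiv.swap_apply_of_ne_of_ne, Fin.succ_succ_ne_one]
  rw [detCols_eq_det, hswap, Matrix.det_permute', Equiv.Perm.sign_swap (by simp)]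
  simp [detCols_eq_det]

theorem linearMap_mul_detCols (α : (Fin (m + 2) → R) →ₗ[R] R) (Y : List (Fin (m + 2) → R))
    (hY : ∀ y ∈ Y, α y = 0) (x v w : Fin (m + 2) → R) :
    α x * detCols (v :: w :: Y) = α v * detCols (x :: w :: Y) - α w * detCols (x :: v :: Y) := by
  set A := Matrix.of fun i j : Fin (m + 2) => (v :: w :: Y).getD j 0 i
  have hcol0 : A.updateCol 0 x = Matrix.of fun i j : Fin (m + 2) => (x :: w :: Y).getD j 0 i := by
    ext i j
    induction j using Fin.cases <;> simp [A, Fin.succ_ne_zero]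
  have hcol1 : A.updateCol 1 x = Matrix.of fun i j : Fin (m + 2) => (v :: x :: Y).getD j 0 i := by
    ext i j
    induction j using Fin.cases with
    | zero => simp [A]
    | succ j => induction j using Fin.cases <;> simp [A, Fin.succ_succ_ne_one]
  have hcolY : ∀ j : Fin m, α (A.col j.succ.succ) = 0 := fun j => by
    have hA : A.col j.succ.succ = Y.getD j 0 := by ext; simp [A]
    rcases lt_or_ge (j : ℕ) Y.length with hj | hj
    · rw [hA, List.getD_eq_getElem _ _ hj]
      exact hY _ (List.getElem_mem hj)
    · rw [hA, List.getD_eq_default _ _ hj, map_zero]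
  rw [detCols_eq_det, Matrix.apply_mul_det_eq_sum_det_updateCol A α x, Fin.sum_univ_succ,
    Fin.sum_univ_succ, Fin.succ_zero_eq_one, hcol0, hcol1]
  simp only [hcolY, zero_mul, sum_const_zero, add_zero]
  rw [← detCols_eq_det, ← detCols_eq_det, detCols_cons_cons_swap v x,
    show A.col 0 = v from rfl, show A.col 1 = w from rfl]
  ring

end detCols

theorem detCols_ne_zero_of_linearIndependent {F : Type} [Field F] [DecidableEq F] {m : ℕ}
    {L : List (Fin m → F)} (hlen : L.length = m) (hnd : L.Nodup)
    (hli : LinearIndependent F (fun v : {x // x ∈ L.toFinset} => (v : Fin m → F))) :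
    detCols L ≠ 0 := by
  have hlt (j : Fin m) : (j : ℕ) < L.length := hlen.symm ▸ j.isLt
  let col (j : Fin m) : {x // x ∈ L.toFinset} :=
    ⟨L.getD j 0, by rw [List.getD_eq_getElem _ _ (hlt j), List.mem_toFinset]; exact L.getElem_mem _⟩
  have hcol : Function.Injective col := fun i j hij => by
    have := congrArg Subtype.val hij
    simp only [col, List.getD_eq_getElem _ _ (hlt _), hnd.getElem_inj_iff] at this
    exact Fin.ext this
  have hunit := Matrix.linearIndependent_cols_iff_isUnit.mp (hli.comp col hcol)
  exact ((Matrix.isUnit_iff_isUnit_det _).mp hunit).ne_zero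

theorem statement5_general (k t : ℕ) (hk : 3 ≤ k)
    (F : Type) [Field F] [DecidableEq F]
    (S : Finset (Fin k → F))
    (harc : ∀ A ⊆ S, A.card = k →
      LinearIndependent F (fun v : {x // x ∈ A} => (v : Fin k → F)) ∧
      Submodule.span F (A : Set (Fin k → F)) = ⊤)
    (T : Finset (Fin k → F) → (Fin k → F) → F) (hT : IsTangentFamily t S T)
    (Y : List (Fin k → F)) (hYnd : Y.Nodup) (hYS : ∀ v ∈ Y, v ∈ S)
    (hYlen : Y.length = k - 2)
    (E : Finset (Fin k → F)) (hES : E ⊆ S) (hEcard : E.card = t + 2)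
    (hYE : ∀ v ∈ Y, v ∉ E) :
    0 = ∑ a ∈ E, T Y.toFinset a * ∏ z ∈ E.erase a, (detCols (z :: a :: Y))⁻¹ := by
  obtain ⟨m, rfl⟩ : ∃ m, k = m + 2 := ⟨k - 2, by omega⟩
  obtain ⟨Φ, hΦ, -, hΦY, -, hTΦ⟩ := hT Y.toFinset (fun v hv => hYS v (List.mem_toFinset.mp hv))
    (by rw [List.toFinset_card_of_nodup hYnd, hYlen])
  have hD : ∀ z ∈ E, ∀ a ∈ E, z ≠ a → detCols (z :: a :: Y) ≠ 0 := by
    intro z hz a ha hza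
    have hnd : (z :: a :: Y).Nodup := by
      simp only [List.nodup_cons, List.mem_cons, not_or]
      exact ⟨⟨hza, fun h => hYE z h hz⟩, fun h => hYE a h ha, hYnd⟩
    have hlen : (z :: a :: Y).length = m + 2 := by simp [hYlen]
    have hsub : (z :: a :: Y).toFinset ⊆ S := fun u hu => by
      simp only [List.toFinset_cons, mem_insert, List.mem_toFinset] at hu
      rcases hu with rfl | rfl | hu
      exacts [hES hz, hES ha, hYS u hu]
    refine detCols_ne_zero_of_linearIndependent hlen hnd (harc _ hsub ?_).1
    rw [List.toFinset_card_of_nodup hnd, hlen]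
  simp only [hTΦ]
  exact (interpolationSum_prod_eq_zero (D := fun z a => detCols (z :: a :: Y))
    (fun x y => detCols_cons_cons_swap x y Y) (fun x => detCols_cons_cons_self x Y)
    (fun (φ : (Fin (m + 2) → F) →ₗ[F] F) x => φ x) Φ
    (fun φ hφ => linearMap_mul_detCols φ Y fun y hy => hΦY φ hφ y (List.mem_toFinset.mpr hy))
    E (by omega) hD).symm

/-- interpolation of the tangent function: if `|S| ≥ k + t`, `Y` is an
ordered subset of `S` of size `k − 2` and `E ⊆ S` has size `t + 2` with `Y ∩ E = ∅`, then
`0 = ∑_{a ∈ E} T_Y(a) ∏_{z ∈ E \ {a}} det(z, a, Y)⁻¹`. -/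
theorem statement5 (p h k q t : ℕ) (hp : p.Prime) (hh : 1 ≤ h) (hq : q = p ^ h)
    (hk : 3 ≤ k)
    (F : Type) [Field F] [Fintype F] [DecidableEq F] (hF : Fintype.card F = q)
    (S : Finset (Fin k → F))
    (harc : ∀ A ⊆ S, A.card = k →
      LinearIndependent F (fun v : {x // x ∈ A} => (v : Fin k → F)) ∧
      Submodule.span F (A : Set (Fin k → F)) = ⊤)
    (ht : S.card + t = q + k - 1) (ht1 : 1 ≤ t) (hSk : k ≤ S.card)
    (T : Finset (Fin k → F) → (Fin k → F) → F) (hT : IsTangentFamily t S T)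
    (hSkt : k + t ≤ S.card)
    (Y : List (Fin k → F)) (hYnd : Y.Nodup) (hYS : ∀ v ∈ Y, v ∈ S)
    (hYlen : Y.length = k - 2)
    (E : Finset (Fin k → F)) (hES : E ⊆ S) (hEcard : E.card = t + 2)
    (hYE : ∀ v ∈ Y, v ∉ E) :
    0 = ∑ a ∈ E, T Y.toFinset a * ∏ z ∈ E.erase a, (detCols (z :: a :: Y))⁻¹ :=
  statement5_general k t hk F S harc T hT Y hYnd hYS hYlen E hES hEcard hYE
end

section
/- Let F be a field, k ≥ 1 and 0 ≤ n ≤ k − 1. Let W = (w_1, …, w_{n+1}) and L = (ℓ_1, …, ℓ_{k−n−1}) be vectors of F^k such that the k vectors w_1, …, w_{n+1}, ℓ_1, …, ℓ_{k−n−1} form a basis of F^k, let X = (x_1, …, x_n) be vectors of F^k and let y ∈ F^k. Then ∑_{j=1}^{n+1} (−1)^{j−1} det(y, W \ w_j, L) · det(w_j, X, L) = det(W, L) · det(y, X, L), where W \ w_j is W with w_j removed (order preserved). -/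
open Finset

section

variable {F : Type} [CommRing F]

lemma detCols_cons_eq_det_updateCol {m : ℕ} (T : List (Fin (m + 1) → F))
    (y : Fin (m + 1) → F) :
    detCols (y :: T) =
      ((Matrix.of fun i j : Fin (m + 1) => ((0 : Fin (m + 1) → F) :: T).getD j 0 i).updateCol
        0 y).det := by
  unfold detCols
  congr 1
  ext i j
  refine Fin.cases ?_ (fun j => ?_) j
  · simp
  · simp [Fin.succ_ne_zero]

def detColsConsLinear {m : ℕ} (T : List (Fin (m + 1) → F)) :
    (Fin (m + 1) → F) →ₗ[F] F where
  toFun y := detCols (y :: T)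
  map_add' y z := by
    simp only [detCols_cons_eq_det_updateCol]
    exact Matrix.det_updateCol_add _ 0 y z
  map_smul' c y := by
    simp only [detCols_cons_eq_det_updateCol, RingHom.id_apply]
    exact Matrix.det_updateCol_smul _ 0 c y

@[simp]
lemma detColsConsLinear_apply {m : ℕ} (T : List (Fin (m + 1) → F)) (y : Fin (m + 1) → F) :
    detColsConsLinear T y = detCols (y :: T) :=
  rfl

lemma detCols_cons_eq_zero_of_mem {k : ℕ} {T : List (Fin k → F)} (hT : T.length < k)
    {v : Fin k → F} (hv : v ∈ T) : detCols (v :: T) = 0 := by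
  obtain ⟨p, hp, rfl⟩ := List.getElem_of_mem hv
  refine Matrix.det_zero_of_column_eq (i := ⟨0, by omega⟩) (j := ⟨p + 1, by omega⟩)
    (by simp [Fin.ext_iff]) fun r => ?_
  simp [List.getElem?_eq_getElem hp]

lemma detCols_cons_getElem_eraseIdx {k : ℕ} (M : List (Fin k → F)) (hM : M.length = k) {i : ℕ}
    (hi : i < M.length) : detCols (M[i] :: M.eraseIdx i) = (-1 : F) ^ i * detCols M := by
  obtain ⟨m, rfl⟩ : ∃ m, k = m + 1 := ⟨k - 1, by omega⟩
  set I : Fin (m + 1) := ⟨i, by omega⟩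
  have hmat : (Matrix.of fun r j : Fin (m + 1) => (M[i] :: M.eraseIdx i).getD j 0 r) =
      (Matrix.of fun r j : Fin (m + 1) => M.getD j 0 r).submatrix id ⇑I.cycleRange⁻¹ := by
    ext r j
    refine Fin.cases ?_ (fun j' => ?_) j
    · simp [Equiv.Perm.inv_def, Fin.cycleRange_symm_zero, I, List.getElem?_eq_getElem hi]
    · simp only [Matrix.submatrix_apply, id_eq, Equiv.Perm.inv_def,
        Fin.cycleRange_symm_succ, Matrix.of_apply, Fin.val_succ, List.getD_eq_getElem?_getD,
        List.getElem?_cons_succ, List.getElem?_eraseIdx]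
      by_cases h : (j' : ℕ) < i
      · rw [if_pos h, Fin.succAbove_of_castSucc_lt _ _ (by simpa [Fin.lt_def, I])]
        simp
      · rw [if_neg h, Fin.succAbove_of_le_castSucc _ _
          (by simp [Fin.le_iff_val_le_val, I]; omega)]
        simp
  unfold detCols
  rw [hmat, Matrix.det_permute', Equiv.Perm.sign_inv, Fin.sign_cycleRange]
  simp [I]

lemma sum_neg_one_pow_mul_detCols_cons_getElem_eraseIdx {k : ℕ} (W L : List (Fin k → F))
    (hWL : (W ++ L).length = k) (c : ℕ → F) {i : ℕ} (hi : i < W.length) :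
    ∑ j ∈ range W.length, (-1 : F) ^ j * c j * detCols (W[i] :: (W.eraseIdx j ++ L)) =
      c i * detCols (W ++ L) := by
  rw [sum_eq_single_of_mem i (mem_range.mpr hi)]
  · have h := detCols_cons_getElem_eraseIdx (W ++ L) hWL (i := i) (by simp; omega)
    rw [List.getElem_append_left hi, List.eraseIdx_append_of_lt_length hi] at h
    rw [h, mul_mul_mul_comm, ← pow_add, ← two_mul, pow_mul, neg_one_sq, one_pow, one_mul]
  · intro j hj hji
    have hmem : W[i] ∈ W.eraseIdx j ++ L :=
      List.mem_append_left _ (List.mem_eraseIdx_iff_getElem.mpr ⟨i, hi, Ne.symm hji, rfl⟩)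
    have hlen : (W.eraseIdx j ++ L).length < k := by
      simp [List.length_eraseIdx_of_lt (mem_range.mp hj)] at hWL ⊢; omega
    rw [detCols_cons_eq_zero_of_mem hlen hmem, mul_zero]

end

theorem statement11_general (F : Type) [Field F] (k n : ℕ)
    (W L X : List (Fin k → F)) (y : Fin k → F)
    (hW : W.length = n + 1) (hL : L.length + n + 1 = k) (hX : X.length = n)
    (hbasis : LinearIndependent F (fun i : Fin k => (W ++ L).getD (i : ℕ) 0) ∧
      Submodule.span F {v | v ∈ W ++ L} = ⊤) :
    ∑ j ∈ Finset.range (n + 1),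
        (-1 : F) ^ j * detCols (y :: (W.eraseIdx j ++ L)) *
          detCols (W.getD j 0 :: (X ++ L)) =
      detCols (W ++ L) * detCols (y :: (X ++ L)) := by
  obtain ⟨m, rfl⟩ : ∃ m, k = m + 1 := ⟨L.length + n, hL.symm⟩
  let c : ℕ → F := fun j => detCols (W.getD j 0 :: (X ++ L))
  suffices h : ∑ j ∈ range (n + 1), ((-1) ^ j * c j) • detColsConsLinear (W.eraseIdx j ++ L) =
      detCols (W ++ L) • detColsConsLinear (X ++ L) by
    have hy := LinearMap.congr_fun h y
    simp only [LinearMap.sum_apply, LinearMap.smul_apply, detColsConsLinear_apply,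
      smul_eq_mul] at hy
    rw [← hy]
    exact sum_congr rfl fun j _ => mul_right_comm _ _ _
  refine LinearMap.ext_on hbasis.2 fun v hv => ?_
  simp only [LinearMap.sum_apply, LinearMap.smul_apply, detColsConsLinear_apply, smul_eq_mul]
  rcases List.mem_append.mp hv with hvW | hvL
  · obtain ⟨i, hi, rfl⟩ := List.getElem_of_mem hvW
    rw [← hW, sum_neg_one_pow_mul_detCols_cons_getElem_eraseIdx W L (by simp; omega) c hi]
    simp only [c, List.getD_eq_getElem _ _ hi, mul_comm]
  · have hlen : ∀ T : List (Fin (m + 1) → F), T.length = n → (T ++ L).length < m + 1 := by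
      intro T hT; simp; omega
    rw [detCols_cons_eq_zero_of_mem (hlen X hX) (List.mem_append_right _ hvL), mul_zero]
    refine sum_eq_zero fun j hj => ?_
    rw [detCols_cons_eq_zero_of_mem (hlen _ ?_) (List.mem_append_right _ hvL), mul_zero]
    rw [List.length_eraseIdx_of_lt (by simpa [hW] using hj), hW, Nat.add_sub_cancel]

/-- Laplace: let `F` be a field, `k ≥ 1`, `0 ≤ n ≤ k − 1`, let
`W = (w_1,…,w_{n+1})` and `L = (ℓ_1,…,ℓ_{k−n−1})` be vectors of `F^k` such that
`w_1,…,w_{n+1},ℓ_1,…,ℓ_{k−n−1}` form a basis of `F^k`, let `X = (x_1,…,x_n)` be vectors of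
`F^k` and `y ∈ F^k`.  Then
`∑_{j=1}^{n+1} (−1)^{j−1} det(y, W∖w_j, L) det(w_j, X, L) = det(W, L) det(y, X, L)`. -/
theorem statement11 (F : Type) [Field F] (k n : ℕ) (hk : 1 ≤ k) (hn : n + 1 ≤ k)
    (W L X : List (Fin k → F)) (y : Fin k → F)
    (hW : W.length = n + 1) (hL : L.length + n + 1 = k) (hX : X.length = n)
    (hbasis : LinearIndependent F (fun i : Fin k => (W ++ L).getD (i : ℕ) 0) ∧
      Submodule.span F {v | v ∈ W ++ L} = ⊤) :
    ∑ j ∈ Finset.range (n + 1),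
        (-1 : F) ^ j * detCols (y :: (W.eraseIdx j ++ L)) *
          detCols (W.getD j 0 :: (X ++ L)) =
      detCols (W ++ L) * detCols (y :: (X ++ L)) :=
  statement11_general F k n W L X y hW hL hX hbasis
end
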